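/- arXiv:1806.07625 — 2 statements merged into one kernel-verified Lean document; each statement's English description precedes it below -/
import Mathlib

section
/- The compression of a binary galled network is a tree: if N is a binary rooted phylogenetic network in which every reticulate node r has a tree-node ancestor w with two internally disjoint directed paths from w to r whose internal nodes are all tree nodes, then the compression N̄ contains no reticulate node and every non-root node of N̄ has indegree 1. -/
open Relation

variable {V : Type*}

/-- Indegree of a node in a digraph given by an edge relation. -/
noncomputable def indeg (E : V → V → Prop) (v : V) : ℕ := Set.ncard {u | E u v}

/-- Outdegree of a node in a digraph given by an edge relation. -/
noncomputable def outdeg (E : V → V → Prop) (v : V) : ℕ := Set.ncard {w | E v w}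

/-- A directed path from `x` to `y` in the digraph `E`, recorded as the list of its nodes. -/
def IsDirPathE (E : V → V → Prop) (x y : V) (p : List V) : Prop :=
  p.head? = some x ∧ p.getLast? = some y ∧ p.Chain' E

/-- `Dom E root x y`: `x` is a dominator of `y`, i.e. `x` is an ancestor of `y` and every
directed path from `root` to `y` contains `x`. -/
def Dom (E : V → V → Prop) (root x y : V) : Prop :=
  Relation.TransGen E x y ∧ ∀ p, IsDirPathE E root y p → x ∈ p

/-- A rooted phylogenetic network: a rooted acyclic digraph with a unique root of indegree 0
and outdegree ≥ 1, in which every non-root node has indegree 1 or outdegree 1, and every node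
is reachable from the root. -/
structure RPN (V : Type*) [Fintype V] where
  E : V → V → Prop
  root : V
  acyclic : ∀ v, ¬ Relation.TransGen E v v
  root_indeg : indeg E root = 0
  root_outdeg : 1 ≤ outdeg E root
  degree_cond : ∀ v, v ≠ root → indeg E v = 1 ∨ outdeg E v = 1
  reachable : ∀ v, Relation.ReflTransGen E root v

namespace RPN

variable [Fintype V] (N : RPN V)

/-- A leaf: indegree 1 and outdegree 0. -/
def isLeaf (v : V) : Prop := indeg N.E v = 1 ∧ outdeg N.E v = 0

/-- A reticulate node: indegree at least 2. -/
def isRetic (v : V) : Prop := 2 ≤ indeg N.E v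

/-- A tree node: the root, or a node of indegree 1 and outdegree at least 2. -/
def isTreeN (v : V) : Prop := v = N.root ∨ (indeg N.E v = 1 ∧ 2 ≤ outdeg N.E v)

/-- A redundant node: indegree 1 and outdegree 1. -/
def isRedund (v : V) : Prop := indeg N.E v = 1 ∧ outdeg N.E v = 1

/-- A directed path from `x` to `y` in `N`. -/
def IsDirPath (x y : V) (p : List V) : Prop := IsDirPathE N.E x y p

/-- `x` lies on every directed path from the root to `y`. -/
def Dominates (x y : V) : Prop := ∀ p, N.IsDirPath N.root y p → x ∈ p

/-- A node is visible if it lies on every root-to-`ℓ` path for some leaf `ℓ`. -/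
def Visible (x : V) : Prop := ∃ ℓ, N.isLeaf ℓ ∧ N.Dominates x ℓ

/-- Tree-child: every non-leaf node has a child that is a leaf, a tree node, or a redundant
node. -/
def TreeChild : Prop :=
  ∀ u, ¬ N.isLeaf u → ∃ c, N.E u c ∧ (N.isLeaf c ∨ N.isTreeN c ∨ N.isRedund c)

/-- Edge of the subgraph induced by the tree nodes. -/
def treeE (u v : V) : Prop := N.E u v ∧ N.isTreeN u ∧ N.isTreeN v

/-- Undirected adjacency in the subgraph induced by the tree nodes. -/
def treeAdj (u v : V) : Prop := N.isTreeN u ∧ N.isTreeN v ∧ (N.E u v ∨ N.E v u)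

/-- The tree-node component of a tree node `u`. -/
def treeComp (u : V) : Set V := {v | Relation.ReflTransGen N.treeAdj u v}

/-- Edge of the subgraph induced by the reticulate nodes. -/
def reticE (u v : V) : Prop := N.E u v ∧ N.isRetic u ∧ N.isRetic v

/-- Undirected adjacency in the subgraph induced by the reticulate nodes. -/
def reticAdj (u v : V) : Prop := N.isRetic u ∧ N.isRetic v ∧ (N.E u v ∨ N.E v u)

/-- The reticulation component of a reticulate node `u`. -/
def reticComp (u : V) : Set V := {v | Relation.ReflTransGen N.reticAdj u v}

open Classical in
/-- The compression quotient map: each tree node is sent to its tree-node component, each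
reticulate node to its reticulation component, and every other node to itself (as a
singleton set). -/
noncomputable def comp (u : V) : Set V :=
  if N.isTreeN u then N.treeComp u else if N.isRetic u then N.reticComp u else {u}

/-- Edge relation of the compression `N̄`: an edge between the (distinct) images of the
endpoints of each edge of `N`. -/
def compE (A B : Set V) : Prop :=
  A ≠ B ∧ ∃ u v, N.E u v ∧ N.comp u = A ∧ N.comp v = B

/-- `N` is binary: reticulate nodes have indegree exactly 2, tree nodes outdegree exactly 2. -/
def Binary : Prop :=
  (∀ v, N.isRetic v → indeg N.E v = 2) ∧ (∀ v, N.isTreeN v → outdeg N.E v = 2)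

/-- `N` is galled: every reticulate node `r` has a tree-node ancestor `w` with two internally
disjoint directed paths from `w` to `r` in which all nodes except `r` are tree nodes. -/
def Galled : Prop :=
  ∀ r, N.isRetic r → ∃ w p q, N.isTreeN w ∧
    N.IsDirPath w r p ∧ N.IsDirPath w r q ∧ p ≠ q ∧
    (∀ x ∈ p.tail.dropLast, x ∉ q.tail.dropLast) ∧
    (∀ x ∈ p, x ≠ r → N.isTreeN x) ∧ (∀ x ∈ q, x ≠ r → N.isTreeN x)

/-- The spanning subgraph determined by a switching `s` choosing one parent of each
reticulate node. -/
def SpanE (s : V → V) (u v : V) : Prop := N.E u v ∧ (N.isRetic v → u = s v)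

/-- `S` is displayed (as a softwired cluster) at `u`: for some switching, the set of leaves
below `u` in the resulting spanning tree is exactly `S`. -/
def DisplayedAt (S : Set V) (u : V) : Prop :=
  ∃ s : V → V, (∀ v, N.isRetic v → N.E (s v) v) ∧
    {ℓ | N.isLeaf ℓ ∧ Relation.ReflTransGen (N.SpanE s) u ℓ} = S

/-- An isolated reticulate node: neither its parents nor its child are reticulate. -/
def IsolatedRetic (w : V) : Prop :=
  N.isRetic w ∧ (∀ x, N.E x w → ¬ N.isRetic x) ∧ (∀ y, N.E w y → ¬ N.isRetic y)

end RPN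

/-! Let `N` be binary and galled. For a reticulation `r`, the last edges of the two paths of its
gall are two distinct edges into `r` whose tails are tree nodes of the tree component of the
gall's top; as `r` has only two parents, all edges into `r` come from that one component. In
particular no reticulation has a reticulate parent, so reticulation components are singletons and
a reticulation has a single in-neighbour in the compression.

A tree node has a unique parent, so a tree component is an out-tree hanging from its top node,
and the only edge entering the component from outside is the edge into that top. This gives at
most one in-neighbour of every compressed node, and exactly one unless the component contains the
root. -/

section Digraph

variable [Finite V] {E : V → V → Prop} {u u' v a b : V}

lemma eq_of_rel_of_indeg_le_one (hv : indeg E v ≤ 1) (hu : E u v) (hu' : E u' v) : u = u' :=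
  (Set.ncard_le_one_iff).mp hv hu hu'

lemma eq_or_eq_of_indeg_eq_two (hv : indeg E v = 2) (ha : E a v) (hb : E b v) (hab : a ≠ b)
    (hu : E u v) : u = a ∨ u = b := by
  have hpair : ({a, b} : Set V) = {x | E x v} :=
    Set.eq_of_subset_of_ncard_le (by rintro x (rfl | rfl) <;> assumption)
      (by rw [Set.ncard_pair hab]; exact hv.le)
  exact hpair.symm.subset hu

end Digraph

lemma List.getLast_cons_ne_getLast_cons {α : Type*} {w : α} {m n : List α} (hmn : m ≠ n)
    (hdisj : ∀ x ∈ m, x ∉ n) (hm : w ∉ m) (hn : w ∉ n) :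
    (w :: m).getLast (cons_ne_nil _ _) ≠ (w :: n).getLast (cons_ne_nil _ _) := by
  cases m with
  | nil =>
    cases n with
    | nil => exact absurd rfl hmn
    | cons y n =>
      rw [getLast_singleton, getLast_cons_cons]
      exact fun h => hn (h ▸ getLast_mem _)
  | cons x m =>
    cases n with
    | nil =>
      rw [getLast_singleton, getLast_cons_cons]
      exact fun h => hm (h ▸ getLast_mem _)
    | cons y n =>
      rw [getLast_cons_cons, getLast_cons_cons]
      exact fun h => hdisj _ (getLast_mem _) (h.symm ▸ getLast_mem _)

lemma IsDirPathE.exists_eq_cons_append {E : V → V → Prop} {x y : V} {p : List V}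
    (hp : IsDirPathE E x y p) (hxy : x ≠ y) : ∃ m, p = x :: m ++ [y] := by
  obtain ⟨hhead, hlast, -⟩ := hp
  obtain ⟨l, rfl⟩ : ∃ l, p = x :: l := ⟨p.tail, (List.cons_head?_tail hhead).symm⟩
  cases l using List.reverseRecOn with
  | nil => exact absurd (by simpa using hlast) hxy
  | append_singleton m z => exact ⟨m, by simp_all [List.getLast?_cons]⟩

namespace RPN

variable [Fintype V] (N : RPN V)

lemma exists_E_of_ne_root {v : V} (hv : v ≠ N.root) : ∃ u, N.E u v := by
  rcases (N.reachable v).cases_tail with h | ⟨u, -, hu⟩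
  exacts [absurd h.symm hv.symm, ⟨u, hu⟩]

lemma wellFounded_transGen : WellFounded (TransGen N.E) :=
  have : Std.Irrefl (TransGen N.E) := ⟨N.acyclic⟩
  Finite.wellFounded_of_trans_of_irrefl _

lemma nodup_of_isChain {l : List V} (hl : l.IsChain N.E) : l.Nodup := by
  have hl' : l.IsChain (TransGen N.E) := hl.imp fun _ _ => TransGen.single
  refine (List.isChain_iff_pairwise.mp hl').imp ?_
  rintro x _ h rfl
  exact N.acyclic x h

lemma not_isRetic_of_isTreeN {v : V} (hv : N.isTreeN v) : ¬ N.isRetic v := by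
  unfold isRetic
  rcases hv with rfl | ⟨hv, -⟩
  · rw [N.root_indeg]; omega
  · omega

lemma eq_of_E_of_not_isRetic {u u' v : V} (hv : ¬ N.isRetic v) (hu : N.E u v)
    (hu' : N.E u' v) : u = u' :=
  eq_of_rel_of_indeg_le_one (by unfold isRetic at hv; omega) hu hu'

variable {N}

instance : Std.Symm N.treeAdj := ⟨fun _ _ ⟨hu, hv, he⟩ => ⟨hv, hu, he.symm⟩⟩

lemma mem_treeComp_comm {t v : V} (h : v ∈ N.treeComp t) : t ∈ N.treeComp v :=
  symm (α := V) (r := ReflTransGen N.treeAdj) h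

lemma isTreeN_of_mem_treeComp {t v : V} (ht : N.isTreeN t) (hv : v ∈ N.treeComp t) :
    N.isTreeN v := by
  induction hv with
  | refl => exact ht
  | tail _ h => exact h.2.1

lemma treeComp_eq_of_mem {t v : V} (hv : v ∈ N.treeComp t) : N.treeComp v = N.treeComp t :=
  Set.ext fun _ => ⟨hv.trans, (mem_treeComp_comm hv).trans⟩

lemma getLast_mem_treeComp_of_isChain {l : List V} {w : V} (hl : (w :: l).IsChain N.E)
    (htree : ∀ x ∈ w :: l, N.isTreeN x) :
    (w :: l).getLast (List.cons_ne_nil _ _) ∈ N.treeComp w :=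
  List.relationReflTransGen_of_exists_isChain_cons _
    (hl.imp_of_mem_imp fun x y hx hy he => ⟨htree x hx, htree y hy, Or.inl he⟩) rfl

lemma reflTransGen_treeE_of_top {t v : V} (htop : ∀ y, ¬ N.treeE y t)
    (hv : v ∈ N.treeComp t) : ReflTransGen N.treeE t v := by
  induction hv with
  | refl => exact .refl
  | @tail x y _ hxy ih =>
    obtain ⟨hx, hy, hxy | hyx⟩ := hxy
    · exact ih.tail ⟨hxy, hx, hy⟩
    · rcases ih.cases_tail with rfl | ⟨c, hc, hcx⟩
      · exact absurd ⟨hyx, hy, hx⟩ (htop y)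
      · rwa [N.eq_of_E_of_not_isRetic (N.not_isRetic_of_isTreeN hx) hyx hcx.1]

lemma eq_of_top_of_mem_treeComp {t t' : V} (htop : ∀ y, ¬ N.treeE y t)
    (htop' : ∀ y, ¬ N.treeE y t') (ht' : t' ∈ N.treeComp t) : t = t' := by
  rcases (reflTransGen_treeE_of_top htop ht').cases_tail with h | ⟨c, -, hc⟩
  exacts [h.symm, absurd hc (htop' c)]

lemma top_of_E_of_not_isTreeN {u v : V} (hu : ¬ N.isTreeN u) (hv : N.isTreeN v)
    (huv : N.E u v) (y : V) : ¬ N.treeE y v := fun hy =>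
  hu (N.eq_of_E_of_not_isRetic (N.not_isRetic_of_isTreeN hv) hy.1 huv ▸ hy.2.1)

lemma eq_of_E_of_mem_treeComp {t u u' v v' : V} (ht : N.isTreeN t) (hv : v ∈ N.treeComp t)
    (hv' : v' ∈ N.treeComp t) (hu : ¬ N.isTreeN u) (hu' : ¬ N.isTreeN u') (huv : N.E u v)
    (huv' : N.E u' v') : u = u' := by
  have hvt := isTreeN_of_mem_treeComp ht hv
  obtain rfl : v = v' :=
    eq_of_top_of_mem_treeComp (top_of_E_of_not_isTreeN hu hvt huv)
      (top_of_E_of_not_isTreeN hu' (isTreeN_of_mem_treeComp ht hv') huv')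
      ((mem_treeComp_comm hv).trans hv')
  exact N.eq_of_E_of_not_isRetic (N.not_isRetic_of_isTreeN hvt) huv huv'

lemma parent_mem_treeComp_of_isChain {w r : V} {l : List V} (hl : (w :: l ++ [r]).IsChain N.E)
    (htree : ∀ x ∈ w :: l ++ [r], x ≠ r → N.isTreeN x) :
    let a := (w :: l).getLast (List.cons_ne_nil _ _)
    N.E a r ∧ N.isTreeN a ∧ a ∈ N.treeComp w ∧ w ∉ l := by
  obtain ⟨hnodup, -, hr⟩ := List.nodup_append.mp (N.nodup_of_isChain hl)
  have htree' : ∀ x ∈ w :: l, N.isTreeN x := fun x hx =>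
    htree x (List.mem_append_left _ hx) (hr x hx r (List.mem_singleton_self r))
  obtain ⟨hchain, -, hlast⟩ := List.isChain_append.mp hl
  exact ⟨hlast _ (List.getLast?_eq_some_getLast _ ▸ rfl) r rfl, htree' _ (List.getLast_mem _),
    getLast_mem_treeComp_of_isChain hchain htree', (List.nodup_cons.mp hnodup).1⟩

lemma exists_treeComp_of_E_of_isRetic (hbin : N.Binary) (hgal : N.Galled) {r : V}
    (hr : N.isRetic r) : ∃ w, ∀ u, N.E u r → N.isTreeN u ∧ u ∈ N.treeComp w := by
  obtain ⟨w, p, q, hw, hp, hq, hpq, hdisj, hpt, hqt⟩ := hgal r hr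
  have hwr : w ≠ r := fun h => N.not_isRetic_of_isTreeN hw (h ▸ hr)
  obtain ⟨m, rfl⟩ := hp.exists_eq_cons_append hwr
  obtain ⟨n, rfl⟩ := hq.exists_eq_cons_append hwr
  obtain ⟨hpE, hpT, hpC, hwm⟩ := parent_mem_treeComp_of_isChain hp.2.2 hpt
  obtain ⟨hqE, hqT, hqC, hwn⟩ := parent_mem_treeComp_of_isChain hq.2.2 hqt
  have hne := List.getLast_cons_ne_getLast_cons (by simpa using hpq) (by simpa using hdisj) hwm hwn
  refine ⟨w, fun u hu => ?_⟩
  rcases eq_or_eq_of_indeg_eq_two (hbin.1 r hr) hpE hqE hne hu with rfl | rfl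
  exacts [⟨hpT, hpC⟩, ⟨hqT, hqC⟩]

lemma not_reticAdj (hbin : N.Binary) (hgal : N.Galled) (u v : V) : ¬ N.reticAdj u v := by
  have parent_not_retic : ∀ {x y}, N.E x y → N.isRetic y → ¬ N.isRetic x := fun hxy hy => by
    obtain ⟨w, hw⟩ := exists_treeComp_of_E_of_isRetic hbin hgal hy
    exact N.not_isRetic_of_isTreeN (hw _ hxy).1
  rintro ⟨hu, hv, huv | hvu⟩
  exacts [parent_not_retic huv hv hu, parent_not_retic hvu hu hv]

lemma comp_of_isTreeN {v : V} (hv : N.isTreeN v) : N.comp v = N.treeComp v := if_pos hv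

lemma comp_of_not_isTreeN (hbin : N.Binary) (hgal : N.Galled) {v : V} (hv : ¬ N.isTreeN v) :
    N.comp v = {v} := by
  rw [comp, if_neg hv]
  split_ifs
  · ext x
    refine ⟨fun hx => ?_, fun hx => hx ▸ .refl⟩
    rcases ReflTransGen.cases_head hx with h | ⟨c, hc, -⟩
    exacts [h.symm, absurd hc (not_reticAdj hbin hgal v c)]
  · rfl

lemma mem_comp_self (v : V) : v ∈ N.comp v := by
  unfold comp
  split_ifs
  exacts [.refl, .refl, rfl]

lemma comp_eq_of_mem_treeComp {t v : V} (ht : N.isTreeN t) (hv : v ∈ N.treeComp t) :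
    N.comp v = N.comp t := by
  rw [comp_of_isTreeN ht, comp_of_isTreeN (isTreeN_of_mem_treeComp ht hv), treeComp_eq_of_mem hv]

lemma comp_ne_comp_of_E (hbin : N.Binary) (hgal : N.Galled) {u v : V} (huv : N.E u v)
    (h : ¬ N.isTreeN u ∨ ¬ N.isTreeN v) : N.comp u ≠ N.comp v := by
  intro heq
  have hvu : v = u := by
    rcases h with h | h
    · have hv : v ∈ N.comp u := heq ▸ mem_comp_self v
      rwa [comp_of_not_isTreeN hbin hgal h] at hv
    · have hu : u ∈ N.comp v := heq.symm ▸ mem_comp_self u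
      rw [comp_of_not_isTreeN hbin hgal h] at hu
      exact hu.symm
  exact N.acyclic u (.single (hvu ▸ huv))

lemma not_isTreeN_of_E_of_comp_ne {t u v : V} (ht : N.isTreeN t) (hv : v ∈ N.treeComp t)
    (huv : N.E u v) (hne : N.comp u ≠ N.comp t) : ¬ N.isTreeN u := fun hu =>
  hne (comp_eq_of_mem_treeComp ht (hv.tail ⟨isTreeN_of_mem_treeComp ht hv, hu, .inr huv⟩))

lemma compE_comp_subsingleton (hbin : N.Binary) (hgal : N.Galled) (x : V) :
    {B | N.compE B (N.comp x)}.Subsingleton := by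
  rintro _ ⟨hne, u, v, huv, rfl, hv⟩ _ ⟨hne', u', v', huv', rfl, hv'⟩
  have hvx : v ∈ N.comp x := hv ▸ mem_comp_self v
  have hv'x : v' ∈ N.comp x := hv' ▸ mem_comp_self v'
  by_cases hx : N.isTreeN x
  · rw [comp_of_isTreeN hx] at hvx hv'x
    rw [eq_of_E_of_mem_treeComp hx hvx hv'x (not_isTreeN_of_E_of_comp_ne hx hvx huv hne)
      (not_isTreeN_of_E_of_comp_ne hx hv'x huv' hne') huv huv']
  rw [comp_of_not_isTreeN hbin hgal hx] at hvx hv'x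
  replace huv : N.E u x := (hvx : v = x) ▸ huv
  replace huv' : N.E u' x := (hv'x : v' = x) ▸ huv'
  by_cases hr : N.isRetic x
  · obtain ⟨w, hw⟩ := exists_treeComp_of_E_of_isRetic hbin hgal hr
    obtain ⟨⟨hu, huw⟩, ⟨-, hu'w⟩⟩ := And.intro (hw u huv) (hw u' huv')
    have hwt : N.isTreeN w := isTreeN_of_mem_treeComp hu (mem_treeComp_comm huw)
    rw [comp_eq_of_mem_treeComp hwt huw, comp_eq_of_mem_treeComp hwt hu'w]
  · rw [N.eq_of_E_of_not_isRetic hr huv huv']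

lemma compE_comp_nonempty (hbin : N.Binary) (hgal : N.Galled) {x : V}
    (hx : N.comp x ≠ N.comp N.root) : {B | N.compE B (N.comp x)}.Nonempty := by
  by_cases hxt : N.isTreeN x
  · obtain ⟨a, ha, hmin⟩ := N.wellFounded_transGen.has_min (N.treeComp x) ⟨x, .refl⟩
    have hat := isTreeN_of_mem_treeComp hxt ha
    have hax := comp_eq_of_mem_treeComp hxt ha
    have har : a ≠ N.root := by
      rintro rfl
      exact hx hax.symm
    obtain ⟨u, hu⟩ := N.exists_E_of_ne_root har
    have hut : ¬ N.isTreeN u := fun hut => hmin u (ha.tail ⟨hat, hut, .inr hu⟩) (.single hu)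
    exact ⟨N.comp u, hax ▸ comp_ne_comp_of_E hbin hgal hu (.inl hut), u, a, hu, rfl, hax⟩
  · obtain ⟨u, hu⟩ := N.exists_E_of_ne_root fun h => hxt (.inl h)
    exact ⟨N.comp u, comp_ne_comp_of_E hbin hgal hu (.inr hxt), u, x, hu, rfl, rfl⟩

end RPN

/-- The compression of a binary galled network is a tree: it contains no
reticulate node and every non-root node has indegree 1. -/
theorem stmt14 [Fintype V] (N : RPN V) (hbin : N.Binary) (hgal : N.Galled) :
    (∀ A ∈ Set.range N.comp, ¬ 2 ≤ Set.ncard {B | N.compE B A}) ∧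
    (∀ A ∈ Set.range N.comp, A ≠ N.comp N.root → Set.ncard {B | N.compE B A} = 1) := by
  refine ⟨?_, ?_⟩
  · rintro _ ⟨x, rfl⟩
    have := Set.ncard_le_one_iff_subsingleton.mpr (N.compE_comp_subsingleton hbin hgal x)
    omega
  · rintro _ ⟨x, rfl⟩ hx
    obtain ⟨B, hB⟩ := N.compE_comp_nonempty hbin hgal hx
    exact Set.ncard_eq_one.mpr
      ⟨B, (N.compE_comp_subsingleton hbin hgal x).eq_singleton_of_mem hB⟩
end

section
/- Let N be a rooted phylogenetic network over X and let u be a tree node in an exposed tree-node component τ (only leaves, isolated reticulate nodes, and redundant nodes occur strictly below τ). Then a subset S ⊆ X is displayed as a softwired cluster at u if and only if (i) every leaf in S is below u, and (ii) no leaf outside S is dominated by u. -/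
open Relation

variable {V : Type*}

/-!
Assuming the two conditions, switch every reticulation with a descendant in `S` to a parent
below `u`, and every other reticulation to a parent not dominated by `u` whenever there is one.
Then every ancestor of `S` below `u` stays below `u`. Conversely, exposedness makes `u` dominate
every tree node below it, and a non-tree node has at most one child; so any node reached from
`u` after switching is an ancestor of `S` or dominated by `u`, and a leaf dominated by `u` lies
in `S` by the second condition.
-/

section DirPath

variable {E E' : V → V → Prop} {a b x : V} {l : List V}

theorem IsDirPathE.mono (hE : ∀ x y, E x y → E' x y) (h : IsDirPathE E a b l) :
    IsDirPathE E' a b l :=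
  ⟨h.1, h.2.1, List.IsChain.imp hE h.2.2⟩

theorem IsDirPathE.reflTransGen_of_mem (h : IsDirPathE E a b l) (hx : x ∈ l) :
    ReflTransGen E x b := by
  refine List.IsChain.backwards_induction (ReflTransGen E · b) l h.2.2
    (fun _ _ hxy hy => hy.head hxy) (fun hne => ?_) x hx
  obtain rfl : l.getLast hne = b := by simpa [List.getLast?_eq_some_getLast hne] using h.2.1
  exact .refl

theorem exists_isDirPathE_of_reflTransGen (h : ReflTransGen E a b) : ∃ l, IsDirPathE E a b l := by
  obtain ⟨l, hne, hl, rfl, rfl⟩ := List.exists_isChain_ne_nil_of_relationReflTransGen h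
  exact ⟨l, List.head?_eq_some_head hne, List.getLast?_eq_some_getLast hne, hl⟩

theorem IsDirPathE.exists_penultimate (h : IsDirPathE E a b l) (hab : a ≠ b) :
    ∃ c l', IsDirPathE E a c l' ∧ E c b ∧ l' ⊆ l := by
  obtain ⟨hhead, hlast, hl⟩ := h
  obtain ⟨l', rfl⟩ : ∃ l', l = l' ++ [b] := by
    rcases List.eq_nil_or_concat l with rfl | ⟨l', x, rfl⟩
    · simp at hhead
    · simp only [List.concat_eq_append, List.getLast?_concat, Option.some_inj] at hlast
      exact ⟨l', by rw [hlast, List.concat_eq_append]⟩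
  obtain ⟨c, hc⟩ : ∃ c, l'.getLast? = some c := by
    cases l' with
    | nil =>
      simp only [List.nil_append, List.head?_cons, Option.some_inj] at hhead
      exact absurd hhead.symm hab
    | cons y t => exact ⟨_, List.getLast?_eq_some_getLast (List.cons_ne_nil y t)⟩
  have hne : l' ≠ [] := by rintro rfl; simp at hc
  replace hl := List.isChain_append.1 hl
  refine ⟨c, l', ⟨?_, hc, hl.1⟩, hl.2.2 c hc b rfl, List.subset_append_left _ _⟩
  simpa [List.head?_append, List.head?_eq_some_head hne] using hhead

end DirPath

section Digraph

variable {E : V → V → Prop} {p q t u v w z : V}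

theorem eq_of_indeg_eq_one (h : indeg E v = 1) (hp : E p v) (hq : E q v) : p = q := by
  obtain ⟨a, ha⟩ := Set.ncard_eq_one.mp h
  have hp' : p ∈ ({a} : Set V) := ha ▸ hp
  have hq' : q ∈ ({a} : Set V) := ha ▸ hq
  exact hp'.trans hq'.symm

theorem eq_of_outdeg_eq_one (h : outdeg E v = 1) (hp : E v p) (hq : E v q) : p = q :=
  eq_of_indeg_eq_one (E := flip E) h hp hq

theorem one_le_indeg [Finite V] (hp : E p v) : 1 ≤ indeg E v :=
  Nat.one_le_iff_ne_zero.mpr (Set.ncard_ne_zero_of_mem hp)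

theorem one_le_outdeg [Finite V] (hw : E v w) : 1 ≤ outdeg E v :=
  one_le_indeg (E := flip E) hw

def SoleParentE (E : V → V → Prop) (a b : V) : Prop := E a b ∧ indeg E b = 1

theorem reflTransGen_soleParentE_or (hzt : ReflTransGen (SoleParentE E) z t)
    (hut : ReflTransGen E u t) : ReflTransGen (SoleParentE E) u t ∨ ReflTransGen E u z := by
  induction hzt with
  | refl => exact .inr hut
  | @tail b c _ hbc ih =>
    rcases hut.cases_tail with rfl | ⟨d, hud, hdc⟩
    · exact .inl .refl
    · obtain rfl := eq_of_indeg_eq_one hbc.2 hdc hbc.1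
      exact (ih hud).imp_left (·.tail hbc)

end Digraph

namespace RPN

variable [Fintype V] {N : RPN V} {S : Set V} {s : V → V} {p u v w t : V}

theorem not_E_root : ¬ N.E p N.root := fun hp => by
  have := one_le_indeg hp; have := N.root_indeg; omega

theorem exists_parent (hv : v ≠ N.root) : ∃ p, N.E p v := by
  rcases (N.reachable v).cases_tail with h | ⟨p, -, hp⟩
  · exact absurd h hv
  · exact ⟨p, hp⟩

theorem ne_root_of_E (hp : N.E p v) : v ≠ N.root := by
  rintro rfl; exact not_E_root hp

variable (N) in
theorem wellFounded_E : WellFounded N.E :=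
  have : IsStrictOrder V (TransGen N.E) :=
    { irrefl := N.acyclic, trans := fun _ _ _ => TransGen.trans }
  Subrelation.wf TransGen.single (Finite.wellFounded_of_trans_of_irrefl _)

variable (N) in
theorem eq_of_reflTransGen_of_reflTransGen (huv : ReflTransGen N.E u v)
    (hvu : ReflTransGen N.E v u) : u = v := by
  rcases reflTransGen_iff_eq_or_transGen.mp huv with h | h
  · exact h.symm
  · rcases reflTransGen_iff_eq_or_transGen.mp hvu with h' | h'
    · exact h'
    · exact absurd (h.trans h') (N.acyclic u)

theorem isRetic.ne_root (h : N.isRetic v) : v ≠ N.root := by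
  rintro rfl; have : 2 ≤ indeg N.E N.root := h; have := N.root_indeg; omega

theorem isTreeN.indeg_eq_one_of_E (h : N.isTreeN v) (hp : N.E p v) : indeg N.E v = 1 :=
  (h.resolve_left (ne_root_of_E hp)).1

theorem isTreeN.not_isLeaf (h : N.isTreeN v) : ¬ N.isLeaf v := by
  rintro ⟨-, hout⟩
  rcases h with rfl | ⟨-, h⟩
  · have := N.root_outdeg; omega
  · omega

theorem isLeaf.not_E (h : N.isLeaf v) : ¬ N.E v w := fun hw => by
  have := one_le_outdeg hw; have := h.2; omega

theorem indeg_eq_one_of_not_isRetic (hv : v ≠ N.root) (hr : ¬ N.isRetic v) :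
    indeg N.E v = 1 := by
  obtain ⟨p, hp⟩ := exists_parent hv
  have := one_le_indeg hp; have : ¬ 2 ≤ indeg N.E v := hr; omega

theorem outdeg_eq_one_of_not_isTreeN (ht : ¬ N.isTreeN v) (hw : N.E v w) : outdeg N.E v = 1 := by
  have hroot : v ≠ N.root := fun h => ht (.inl h)
  have := one_le_outdeg hw
  rcases N.degree_cond v hroot with h | h
  · by_contra hne; exact ht (.inr ⟨h, by omega⟩)
  · exact h

variable (N) in
theorem dominates_refl (u : V) : N.Dominates u u := fun _ hp => List.mem_of_getLast? hp.2.1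

theorem dominates_of_forall_parent (hv : v ≠ N.root) (h : ∀ p, N.E p v → N.Dominates u p) :
    N.Dominates u v := fun l hl => by
  obtain ⟨c, l', hl', hc, hsub⟩ := IsDirPathE.exists_penultimate hl hv.symm
  exact hsub (h c hc l' hl')

theorem dominates_of_reflTransGen_soleParentE (h : ReflTransGen (SoleParentE N.E) u t) :
    N.Dominates u t := by
  induction h with
  | refl => exact N.dominates_refl u
  | @tail b c _ hbc ih =>
    refine dominates_of_forall_parent (ne_root_of_E hbc.1) fun p hp => ?_
    rwa [eq_of_indeg_eq_one hbc.2 hp hbc.1]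

theorem exists_soleParentE_ancestor (h : ReflTransGen N.treeAdj u t) :
    ∃ z, ReflTransGen (SoleParentE N.E) z u ∧ ReflTransGen (SoleParentE N.E) z t := by
  induction h with
  | refl => exact ⟨u, .refl, .refl⟩
  | @tail b c _ hbc ih =>
    obtain ⟨z, hzu, hzb⟩ := ih
    obtain ⟨hb, hc, hbc | hcb⟩ := hbc
    · exact ⟨z, hzu, hzb.tail ⟨hbc, hc.indeg_eq_one_of_E hbc⟩⟩
    · have hcb' : SoleParentE N.E c b := ⟨hcb, hb.indeg_eq_one_of_E hcb⟩
      rcases hzb.cases_tail with rfl | ⟨d, hzd, hdb⟩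
      · exact ⟨c, hzu.head hcb', .refl⟩
      · obtain rfl := eq_of_indeg_eq_one hdb.2 hdb.1 hcb
        exact ⟨z, hzu, hzd⟩

theorem dominates_of_mem_treeComp (ht : t ∈ N.treeComp u) (hut : ReflTransGen N.E u t) :
    N.Dominates u t := by
  obtain ⟨z, hzu, hzt⟩ := exists_soleParentE_ancestor ht
  rcases reflTransGen_soleParentE_or hzt hut with h | h
  · exact dominates_of_reflTransGen_soleParentE h
  · obtain rfl :=
      N.eq_of_reflTransGen_of_reflTransGen h (ReflTransGen.mono (fun _ _ h => h.1) _ _ hzu)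
    exact dominates_of_reflTransGen_soleParentE hzt

theorem mem_treeComp_of_exposed
    (hexp : ∀ w, (∃ t ∈ N.treeComp u, Relation.TransGen N.E t w) → w ∉ N.treeComp u →
      N.isLeaf w ∨ N.IsolatedRetic w ∨ N.isRedund w)
    (ht : N.isTreeN t) (hut : ReflTransGen N.E u t) : t ∈ N.treeComp u := by
  by_contra hnot
  rcases reflTransGen_iff_eq_or_transGen.mp hut with rfl | hut
  · exact hnot .refl
  obtain ⟨p, -, hp⟩ := TransGen.tail'_iff.mp hut
  obtain ⟨hin, hout⟩ := ht.resolve_left (ne_root_of_E hp)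
  rcases hexp t ⟨u, .refl, hut⟩ hnot with h | h | h
  · have := h.2; omega
  · have : 2 ≤ indeg N.E t := h.1; omega
  · have := h.2; omega

variable (N) in
theorem exists_switching_preferring (P : V → V → Prop) :
    ∃ s : V → V, (∀ v, N.isRetic v → N.E (s v) v) ∧ ∀ v p, N.E p v → P v p → P v (s v) := by
  have (v : V) : ∃ q, (N.isRetic v → N.E q v) ∧ ∀ p, N.E p v → P v p → P v q := by
    by_cases h : ∃ p, N.E p v ∧ P v p
    · obtain ⟨p, hp, hP⟩ := h
      exact ⟨p, fun _ => hp, fun _ _ _ => hP⟩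
    · obtain ⟨q, hq⟩ : ∃ q, N.isRetic v → N.E q v := by
        by_cases hr : N.isRetic v
        · exact (exists_parent hr.ne_root).imp fun _ hq _ => hq
        · exact ⟨v, fun h => absurd h hr⟩
      exact ⟨q, hq, fun p hp hP => absurd ⟨p, hp, hP⟩ h⟩
  choose s hs using this
  exact ⟨s, fun v => (hs v).1, fun v => (hs v).2⟩

theorem reflTransGen_of_reflTransGen_spanE (h : ReflTransGen (N.SpanE s) u v) :
    ReflTransGen N.E u v :=
  ReflTransGen.mono (fun _ _ h => h.1) _ _ h

theorem reflTransGen_spanE_root (hs : ∀ v, N.isRetic v → N.E (s v) v) (v : V) :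
    ReflTransGen (N.SpanE s) N.root v := by
  induction v using N.wellFounded_E.induction with
  | _ v ih =>
  by_cases hv : v = N.root
  · rw [hv]
  obtain ⟨p, hp⟩ : ∃ p, N.SpanE s p v := by
    by_cases hr : N.isRetic v
    · exact ⟨s v, hs v hr, fun _ => rfl⟩
    · obtain ⟨p, hp⟩ := exists_parent hv
      exact ⟨p, hp, fun h => absurd h hr⟩
  exact (ih p hp.1).tail hp

theorem reflTransGen_spanE_of_dominates (hs : ∀ v, N.isRetic v → N.E (s v) v)
    (h : N.Dominates u v) : ReflTransGen (N.SpanE s) u v := by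
  obtain ⟨l, hl⟩ := exists_isDirPathE_of_reflTransGen (reflTransGen_spanE_root hs v)
  exact hl.reflTransGen_of_mem (h l (hl.mono fun _ _ h => h.1))

variable (N) in
def ancestors (S : Set V) : Set V := {v | ∃ ℓ ∈ S, ReflTransGen N.E v ℓ}

theorem mem_ancestors_of_E (hvw : N.E v w) (hw : w ∈ N.ancestors S) : v ∈ N.ancestors S :=
  let ⟨ℓ, hℓ, hwℓ⟩ := hw
  ⟨ℓ, hℓ, hwℓ.head hvw⟩

theorem mem_ancestors_of_outdeg_eq_one (hS : ∀ ℓ ∈ S, N.isLeaf ℓ) (hv : v ∈ N.ancestors S)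
    (hv1 : outdeg N.E v = 1) (hvw : N.E v w) : w ∈ N.ancestors S := by
  obtain ⟨ℓ, hℓ, hvℓ⟩ := hv
  rcases hvℓ.cases_head with rfl | ⟨c, hvc, hcℓ⟩
  · exact absurd hvw (hS v hℓ).not_E
  · exact ⟨ℓ, hℓ, eq_of_outdeg_eq_one hv1 hvc hvw ▸ hcℓ⟩

theorem isLeaf.mem_of_mem_ancestors (h : N.isLeaf v) (hv : v ∈ N.ancestors S) : v ∈ S := by
  obtain ⟨ℓ, hℓ, hvℓ⟩ := hv
  rcases hvℓ.cases_head with rfl | ⟨c, hvc, -⟩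
  · exact hℓ
  · exact absurd hvc h.not_E

theorem reflTransGen_spanE_of_mem_ancestors
    (hs : ∀ v p, N.isRetic v → v ∈ N.ancestors S → N.E p v → ReflTransGen N.E u p →
      N.E (s v) v ∧ ReflTransGen N.E u (s v))
    (hv : v ∈ N.ancestors S) (huv : ReflTransGen N.E u v) : ReflTransGen (N.SpanE s) u v := by
  induction v using N.wellFounded_E.induction with
  | _ v ih =>
  rcases huv.cases_tail with rfl | ⟨p, hup, hpv⟩
  · exact .refl
  by_cases hr : N.isRetic v
  · obtain ⟨hsv, hus⟩ := hs v p hr hv hpv hup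
    exact (ih _ hsv (mem_ancestors_of_E hsv hv) hus).tail ⟨hsv, fun _ => rfl⟩
  · exact (ih p hpv (mem_ancestors_of_E hpv hv) hup).tail ⟨hpv, fun h => absurd h hr⟩

theorem mem_ancestors_or_dominates_of_spanE (hS : ∀ ℓ ∈ S, N.isLeaf ℓ)
    (htree : ∀ t, N.isTreeN t → ReflTransGen N.E u t → N.Dominates u t)
    (hs : ∀ v p, N.isRetic v → v ∉ N.ancestors S → N.E p v → ¬ N.Dominates u p →
      ¬ N.Dominates u (s v))
    (hv : ReflTransGen (N.SpanE s) u v) : v ∈ N.ancestors S ∨ N.Dominates u v := by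
  induction v using N.wellFounded_E.induction with
  | _ v ih =>
  by_cases ht : N.isTreeN v
  · exact .inr (htree v ht (reflTransGen_of_reflTransGen_spanE hv))
  rcases hv.cases_tail with rfl | ⟨p, hup, hpv⟩
  · exact .inr (N.dominates_refl _)
  have hp : v ∈ N.ancestors S ∨ N.Dominates u p := by
    by_cases hpt : N.isTreeN p
    · exact .inr (htree p hpt (reflTransGen_of_reflTransGen_spanE hup))
    · exact (ih p hpv.1 hup).imp_left fun h =>
        mem_ancestors_of_outdeg_eq_one hS h (outdeg_eq_one_of_not_isTreeN hpt hpv.1) hpv.1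
  by_cases hvS : v ∈ N.ancestors S
  · exact .inl hvS
  have hdp : N.Dominates u p := hp.resolve_left hvS
  refine .inr (dominates_of_forall_parent (ne_root_of_E hpv.1) fun q hq => ?_)
  by_cases hr : N.isRetic v
  · rw [hpv.2 hr] at hdp
    by_contra hdq
    exact hs v q hr hvS hq hdq hdp
  · rwa [eq_of_indeg_eq_one (indeg_eq_one_of_not_isRetic (ne_root_of_E hq) hr) hq hpv.1]

end RPN

/-- Let `u` be a tree node in an exposed tree-node component (every node
strictly below the component is a leaf, an isolated reticulate node, or a redundant node).
Then a set `S` of leaves is displayed as a softwired cluster at `u` iff every leaf in `S` is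
below `u` and no leaf outside `S` is dominated by `u`. -/
theorem stmt17 [Fintype V] (N : RPN V) (u : V) (hu : N.isTreeN u)
    (hexp : ∀ w, (∃ t ∈ N.treeComp u, Relation.TransGen N.E t w) → w ∉ N.treeComp u →
      N.isLeaf w ∨ N.IsolatedRetic w ∨ N.isRedund w)
    (S : Set V) (hS : ∀ ℓ ∈ S, N.isLeaf ℓ) :
    N.DisplayedAt S u ↔
      ((∀ ℓ ∈ S, Relation.TransGen N.E u ℓ) ∧
       (∀ ℓ, N.isLeaf ℓ → ℓ ∉ S → ¬ N.Dominates u ℓ)) := by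
  constructor
  · rintro ⟨s, hs, rfl⟩
    refine ⟨fun ℓ ⟨hℓ, huℓ⟩ => ?_, fun ℓ hℓ hℓS hdom =>
      hℓS ⟨hℓ, RPN.reflTransGen_spanE_of_dominates hs hdom⟩⟩
    refine (reflTransGen_iff_eq_or_transGen.mp
      (RPN.reflTransGen_of_reflTransGen_spanE huℓ)).resolve_left ?_
    rintro rfl
    exact hu.not_isLeaf hℓ
  · rintro ⟨hbelow, hnotdom⟩
    obtain ⟨s, hs, hpref⟩ := N.exists_switching_preferring fun v p =>
      (v ∈ N.ancestors S → ReflTransGen N.E u p) ∧ (v ∉ N.ancestors S → ¬ N.Dominates u p)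
    have htree t (ht : N.isTreeN t) (hut : ReflTransGen N.E u t) : N.Dominates u t :=
      RPN.dominates_of_mem_treeComp (RPN.mem_treeComp_of_exposed hexp ht hut) hut
    refine ⟨s, hs, Set.ext fun ℓ => ⟨fun ⟨hℓ, huℓ⟩ => ?_, fun hℓS => ⟨hS ℓ hℓS, ?_⟩⟩⟩
    · refine (RPN.mem_ancestors_or_dominates_of_spanE hS htree
        (fun v p _ hvS hpv hdp => ?_) huℓ).elim hℓ.mem_of_mem_ancestors fun hdom => ?_
      · exact (hpref v p hpv ⟨fun h => absurd h hvS, fun _ => hdp⟩).2 hvS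
      · by_contra hℓS
        exact hnotdom ℓ hℓ hℓS hdom
    · refine RPN.reflTransGen_spanE_of_mem_ancestors (fun v p hr hvS hpv hup => ?_)
        ⟨ℓ, hℓS, .refl⟩ (hbelow ℓ hℓS).to_reflTransGen
      exact ⟨hs v hr, (hpref v p hpv ⟨fun _ => hup, fun h => absurd hvS h⟩).1 hvS⟩
end
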